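/- Define a weight function u by u(1) = u(1/2) = u(1/3) = 2 and u(1/7^i) = 1/7^{i−1} for every integer i ≥ 1. For an integer k ≥ 1, let S_k = {1, 1/2, 1/3} ∪ {1/7^j : 1 ≤ j ≤ k}. Then the maximum of u(a) + Σ_{t∈T} u(t) over all finite multisets T with elements in S_k satisfying Σ_{t∈T} t < 1 and all a ∈ S_k equals 9 − 1/7^{k−1}. Moreover, the analogous maxima when the allowed size sets are {1}, {1, 1/2}, and {1, 1/2, 1/3} are 2, 4, and 6, respectively. -/
import Mathlib


open scoped BigOperators

noncomputable section

/-- The weight function: items of size 1, 1/2, 1/3 have weight 2, and an item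
of size `1/7^i` has weight `1/7^{i-1} = 7·(1/7^i)`. -/
def u (x : ℝ) : ℝ :=
  if x = 1 ∨ x = 1 / 2 ∨ x = 1 / 3 then 2 else 7 * x

/-- The set of possible total weights of a single bin with item sizes from
`S`: a multiset `T` of items of total size strictly below 1 plus one
additional (last) item `a`. -/
def binWeights (S : Set ℝ) : Set ℝ :=
  {W : ℝ | ∃ (T : Multiset ℝ) (a : ℝ), (∀ x ∈ T, x ∈ S) ∧ a ∈ S ∧
    T.sum < 1 ∧ W = u a + (T.map u).sum}

lemma u_one : u 1 = 2 := by simp [u]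
lemma u_half : u (1/2) = 2 := by simp [u]
lemma u_third : u (1/3) = 2 := by norm_num [u]

lemma u_small (j : ℕ) : u (1/7^(j+1)) = 1/7^j := by
  have h7 : (7:ℝ) ≤ 7^(j+1) := le_self_pow₀ (by norm_num) (Nat.succ_ne_zero j)
  have hle : (1:ℝ)/7^(j+1) ≤ 1/7 := by
    exact one_div_le_one_div_of_le (by norm_num) h7
  have : ¬ ((1:ℝ)/7^(j+1) = 1 ∨ (1:ℝ)/7^(j+1) = 1/2 ∨ (1:ℝ)/7^(j+1) = 1/3) := by
    push_neg
    refine ⟨?_, ?_, ?_⟩ <;> intro h <;> rw [h] at hle <;> norm_num at hle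
  rw [u, if_neg this]
  rw [pow_succ]
  field_simp

lemma g1 (k : ℕ) : ∑ j ∈ Finset.range k, ((1:ℝ)/7^(j+1)) = (1 - 1/7^k)/6 := by
  induction k with
  | zero => simp
  | succ n ih =>
    rw [Finset.sum_range_succ, ih, pow_succ]
    have : (7:ℝ)^n ≠ 0 := by positivity
    field_simp
    ring

lemma g2 (m : ℕ) : ∑ j ∈ Finset.range (m+1), ((1:ℝ)/7^j) = (7 - 1/7^m)/6 := by
  induction m with
  | zero => norm_num
  | succ n ih =>
    rw [Finset.sum_range_succ, ih, pow_succ]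
    have : (7:ℝ)^n ≠ 0 := by positivity
    field_simp
    ring

lemma sum_map_le (T : Multiset ℝ) (h : ∀ x ∈ T, u x ≤ 7 * x) :
    (T.map u).sum ≤ 7 * T.sum := by
  induction T using Multiset.induction with
  | empty => simp
  | cons a s ih =>
    simp only [Multiset.map_cons, Multiset.sum_cons]
    have h1 := h a (Multiset.mem_cons_self a s)
    have h2 := ih (fun x hx => h x (Multiset.mem_cons_of_mem hx))
    calc u a + (s.map u).sum ≤ 7 * a + 7 * s.sum := by linarith
    _ = 7 * (a + s.sum) := by ring

lemma sum_map_nat (ε : ℝ) (T : Multiset ℝ) (h : ∀ x ∈ T, ∃ m : ℕ, u x = m * ε) :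
    ∃ n : ℕ, (T.map u).sum = n * ε := by
  induction T using Multiset.induction with
  | empty => exact ⟨0, by simp⟩
  | cons a s ih =>
    obtain ⟨m, hm⟩ := h a (Multiset.mem_cons_self a s)
    obtain ⟨n, hn⟩ := ih (fun x hx => h x (Multiset.mem_cons_of_mem hx))
    refine ⟨m + n, ?_⟩
    simp only [Multiset.map_cons, Multiset.sum_cons, hm, hn]
    push_cast
    ring

lemma sum_map_two (T : Multiset ℝ) (h : ∀ x ∈ T, u x = 2) :
    (T.map u).sum = 2 * (T.card : ℝ) := by
  induction T using Multiset.induction with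
  | empty => simp
  | cons a s ih =>
    simp only [Multiset.map_cons, Multiset.sum_cons, Multiset.card_cons,
      h a (Multiset.mem_cons_self a s),
      ih (fun x hx => h x (Multiset.mem_cons_of_mem hx))]
    push_cast
    ring

lemma card_le (T : Multiset ℝ) (c : ℝ) (h : ∀ x ∈ T, c ≤ x) :
    (T.card : ℝ) * c ≤ T.sum := by
  induction T using Multiset.induction with
  | empty => simp
  | cons a s ih =>
    have h1 := h a (Multiset.mem_cons_self a s)
    have h2 := ih (fun x hx => h x (Multiset.mem_cons_of_mem hx))
    simp only [Multiset.sum_cons, Multiset.card_cons]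
    push_cast
    linarith

-- Part 2
lemma part2 : IsGreatest (binWeights ({1} : Set ℝ)) 2 := by
  constructor
  · exact ⟨0, 1, by simp, rfl, by norm_num, by simp [u_one]⟩
  · rintro W ⟨T, a, hT, ha, hsum, rfl⟩
    rw [Set.mem_singleton_iff] at ha
    subst ha
    have hc : (T.card : ℝ) * 1 ≤ T.sum :=
      card_le T 1 (fun x hx => le_of_eq (hT x hx).symm)
    have : T.card = 0 := by
      by_contra h
      have : (1:ℝ) ≤ (T.card : ℝ) := by exact_mod_cast Nat.one_le_iff_ne_zero.mpr h
      linarith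
    rw [Multiset.card_eq_zero] at this
    subst this
    simp [u_one]

-- Part 3
lemma part3 : IsGreatest (binWeights ({1, 1/2} : Set ℝ)) 4 := by
  constructor
  · refine ⟨{1/2}, 1, ?_, by simp, by norm_num, ?_⟩
    · intro x hx; rw [Multiset.mem_singleton] at hx; subst hx; simp
    · simp only [Multiset.map_singleton, Multiset.sum_singleton, u_one, u_half]
      norm_num
  · rintro W ⟨T, a, hT, ha, hsum, rfl⟩
    have hu2 : ∀ x ∈ T, u x = 2 := by
      intro x hx
      rcases hT x hx with rfl | rfl
      · exact u_one
      · exact u_half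
    have hge : ∀ x ∈ T, (1/2:ℝ) ≤ x := by
      intro x hx
      rcases hT x hx with rfl | rfl <;> norm_num
    have hc := card_le T (1/2) hge
    have hcard : T.card ≤ 1 := by
      by_contra h
      have : (2:ℝ) ≤ (T.card : ℝ) := by exact_mod_cast by omega
      linarith
    have hua : u a ≤ 2 := by
      rcases ha with rfl | rfl
      · exact le_of_eq u_one
      · exact le_of_eq u_half
    have hcard' : ((T.card : ℝ)) ≤ 1 := by exact_mod_cast hcard
    rw [sum_map_two T hu2]
    linarith

-- Part 4
lemma part4 : IsGreatest (binWeights ({1, 1/2, 1/3} : Set ℝ)) 6 := by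
  constructor
  · refine ⟨{1/2, 1/3}, 1, ?_, by simp, by norm_num, ?_⟩
    · intro x hx
      rcases Multiset.mem_cons.mp hx with rfl | hx
      · simp
      · rw [Multiset.mem_singleton] at hx; subst hx; right; right; rfl
    · simp only [Multiset.map_cons, Multiset.map_singleton, Multiset.sum_cons,
        Multiset.sum_singleton, u_one, u_half, u_third]
      norm_num [u]
  · rintro W ⟨T, a, hT, ha, hsum, rfl⟩
    have hu2 : ∀ x ∈ T, u x = 2 := by
      intro x hx
      rcases hT x hx with rfl | rfl | rfl
      · exact u_one
      · exact u_half
      · exact u_third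
    have hge : ∀ x ∈ T, (1/3:ℝ) ≤ x := by
      intro x hx
      rcases hT x hx with rfl | rfl | rfl <;> norm_num
    have hc := card_le T (1/3) hge
    have hcard : T.card ≤ 2 := by
      by_contra h
      have : (3:ℝ) ≤ (T.card : ℝ) := by exact_mod_cast by omega
      linarith
    have hua : u a ≤ 2 := by
      rcases ha with rfl | rfl | rfl
      · exact le_of_eq u_one
      · exact le_of_eq u_half
      · exact le_of_eq u_third
    have hcard' : ((T.card : ℝ)) ≤ 2 := by exact_mod_cast hcard
    rw [sum_map_two T hu2]
    linarith

-- Part 1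
lemma part1 (k : ℕ) (hk : 1 ≤ k) :
    IsGreatest
      (binWeights (({1, 1 / 2, 1 / 3} : Set ℝ) ∪
        {x : ℝ | ∃ j : ℕ, 1 ≤ j ∧ j ≤ k ∧ x = 1 / 7 ^ j}))
      (9 - 1 / 7 ^ (k - 1)) := by
  obtain ⟨m, rfl⟩ : ∃ m, k = m + 1 := ⟨k - 1, by omega⟩
  have hm1 : m + 1 - 1 = m := rfl
  constructor
  · -- witness
    refine ⟨6 • ((Multiset.range (m+1)).map (fun j => (1:ℝ)/7^(j+1))), 1, ?_, ?_, ?_, ?_⟩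
    · intro x hx
      rw [Multiset.mem_nsmul] at hx
      replace hx := hx.2
      obtain ⟨j, hj, rfl⟩ := Multiset.mem_map.mp hx
      rw [Multiset.mem_range] at hj
      exact Or.inr ⟨j+1, by omega, by omega, rfl⟩
    · exact Or.inl (Or.inl rfl)
    · have hs : ((Multiset.range (m+1)).map (fun j => (1:ℝ)/7^(j+1))).sum
          = ∑ j ∈ Finset.range (m+1), ((1:ℝ)/7^(j+1)) := rfl
      rw [Multiset.sum_nsmul, hs, g1]
      have : (0:ℝ) < 1/7^(m+1) := by positivity
      rw [nsmul_eq_mul]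
      push_cast
      linarith
    · rw [Multiset.map_nsmul, Multiset.map_map, Multiset.sum_nsmul]
      have hs : ((Multiset.range (m+1)).map (u ∘ fun j => (1:ℝ)/7^(j+1))).sum
          = ∑ j ∈ Finset.range (m+1), u ((1:ℝ)/7^(j+1)) := rfl
      rw [hs]
      have : ∑ j ∈ Finset.range (m+1), u ((1:ℝ)/7^(j+1))
          = ∑ j ∈ Finset.range (m+1), ((1:ℝ)/7^j) :=
        Finset.sum_congr rfl (fun j _ => u_small j)
      rw [this, g2, u_one, hm1]
      push_cast
      ring
  · rintro W ⟨T, a, hT, ha, hsum, rfl⟩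
    rw [hm1]
    set ε : ℝ := 1/7^m with hε
    have hεpos : 0 < ε := by positivity
    have hua : u a ≤ 2 := by
      rcases ha with (rfl | rfl | rfl) | ⟨j, hj1, hjk, rfl⟩
      · exact le_of_eq u_one
      · exact le_of_eq u_half
      · exact le_of_eq u_third
      · obtain ⟨i, rfl⟩ : ∃ i, j = i + 1 := ⟨j - 1, by omega⟩
        rw [u_small i]
        have : (1:ℝ) ≤ 7^i := one_le_pow₀ (by norm_num)
        rw [div_le_iff₀ (by positivity)]
        nlinarith
    have hle : ∀ x ∈ T, u x ≤ 7 * x := by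
      intro x hx
      rcases hT x hx with (rfl | rfl | rfl) | ⟨j, hj1, hjk, rfl⟩
      · rw [u_one]; norm_num
      · rw [u_half]; norm_num
      · rw [u_third]; norm_num
      · obtain ⟨i, rfl⟩ : ∃ i, j = i + 1 := ⟨j - 1, by omega⟩
        rw [u_small i]
        apply le_of_eq
        rw [pow_succ]
        field_simp
    have hnat : ∀ x ∈ T, ∃ n : ℕ, u x = n * ε := by
      intro x hx
      have h2 : (2:ℝ) = (2 * 7^m : ℕ) * ε := by
        rw [hε]; push_cast
        field_simp
      rcases hT x hx with (rfl | rfl | rfl) | ⟨j, hj1, hjk, rfl⟩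
      · exact ⟨2 * 7^m, by rw [u_one]; exact h2⟩
      · exact ⟨2 * 7^m, by rw [u_half]; exact h2⟩
      · exact ⟨2 * 7^m, by rw [u_third]; exact h2⟩
      · obtain ⟨i, rfl⟩ : ∃ i, j = i + 1 := ⟨j - 1, by omega⟩
        refine ⟨7^(m - i), ?_⟩
        rw [u_small i, hε]
        have hpow : (7:ℝ)^m = 7^(m-i) * 7^i := by
          rw [← pow_add]; congr 1; omega
        push_cast
        rw [hpow]
        have h1 : (7:ℝ)^(m-i) ≠ 0 := by positivity
        have h2 : (7:ℝ)^i ≠ 0 := by positivity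
        field_simp
    obtain ⟨n, hn⟩ := sum_map_nat ε T hnat
    have hlt : (n:ℝ) * ε < 7 := by
      calc (n:ℝ) * ε = (T.map u).sum := hn.symm
      _ ≤ 7 * T.sum := sum_map_le T hle
      _ < 7 := by linarith
    have hn7 : n < 7^(m+1) := by
      have h7 : (7:ℝ) = (7^(m+1) : ℕ) * ε := by
        rw [hε, pow_succ]; push_cast; field_simp
      rw [h7] at hlt
      exact_mod_cast lt_of_mul_lt_mul_right hlt (le_of_lt hεpos)
    have hsumle : (T.map u).sum ≤ 7 - ε := by
      rw [hn]
      have : (n:ℝ) ≤ (7^(m+1) : ℕ) - 1 := by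
        have : n + 1 ≤ 7^(m+1) := hn7
        have := (Nat.cast_le (α := ℝ)).mpr this
        push_cast at this ⊢
        linarith
      have h7 : ((7^(m+1):ℕ):ℝ) * ε = 7 := by
        rw [hε, pow_succ]; push_cast; field_simp
      calc (n:ℝ) * ε ≤ (((7^(m+1):ℕ):ℝ) - 1) * ε := by
            apply mul_le_mul_of_nonneg_right this (le_of_lt hεpos)
      _ = ((7^(m+1):ℕ):ℝ) * ε - ε := by ring
      _ = 7 - ε := by rw [h7]
    linarith


/-- the maximum total weight of a bin with sizes in
`S_k = {1, 1/2, 1/3} ∪ {1/7^j : 1 ≤ j ≤ k}` is `9 − 1/7^{k−1}`, and the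
maxima for the size sets `{1}`, `{1,1/2}` and `{1,1/2,1/3}` are `2`, `4` and
`6` respectively. -/
theorem stmt17 (k : ℕ) (hk : 1 ≤ k) :
    IsGreatest
      (binWeights (({1, 1 / 2, 1 / 3} : Set ℝ) ∪
        {x : ℝ | ∃ j : ℕ, 1 ≤ j ∧ j ≤ k ∧ x = 1 / 7 ^ j}))
      (9 - 1 / 7 ^ (k - 1)) ∧
    IsGreatest (binWeights ({1} : Set ℝ)) 2 ∧
    IsGreatest (binWeights ({1, 1 / 2} : Set ℝ)) 4 ∧
    IsGreatest (binWeights ({1, 1 / 2, 1 / 3} : Set ℝ)) 6 := by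
  exact ⟨part1 k hk, part2, part3, part4⟩

end
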